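/- For N, k, n ≥ 0, Σ_{j=0}^{⌊k/4⌋} p̄_4(N, N+1−k+4j, j, k−4j, n − C(k−4j,2)) = Σ_{j=0}^{⌊k/2⌋} (−1)^j · p̄_2(N, N, j, k−2j, n), where terms with a negative last argument are zero. -/

import Mathlib

open Polynomial

/-- Gaussian binomial coefficient `[n choose k]_q` as a polynomial in `ℤ[q]`,
defined by the Pascal-type recurrence; it is `0` when `k > n`. -/
noncomputable def gauss : ℕ → ℕ → Polynomial ℤ
  | _, 0 => 1
  | 0, _ + 1 => 0
  | n + 1, k + 1 => gauss n (k + 1) + Polynomial.X ^ (n - k) * gauss n k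

/-- `p(N,k,n)`: number of partitions of `n` into at most `k` parts, each part
positive and at most `N`. -/
noncomputable def pcount (N k n : ℕ) : ℕ :=
  Nat.card {s : Multiset ℕ //
    s.sum = n ∧ s.card ≤ k ∧ ∀ x ∈ s, 0 < x ∧ x ≤ N}

/-- `p̄_r(N₁,N₂,k₁,k₂,n)`: number of two-colored partitions of `n` with at most `k₁`
parts of the first kind, each positive, divisible by `r` and at most `N₁·r`, and at
most `k₂` parts of the second kind, each positive and at most `N₂`. -/
noncomputable def pbar (r N1 N2 k1 k2 n : ℕ) : ℕ :=
  Nat.card {p : Multiset ℕ × Multiset ℕ //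
    p.1.sum + p.2.sum = n ∧ p.1.card ≤ k1 ∧ p.2.card ≤ k2 ∧
    (∀ x ∈ p.1, 0 < x ∧ r ∣ x ∧ x ≤ N1 * r) ∧ (∀ x ∈ p.2, 0 < x ∧ x ≤ N2)}

/-- `p̄_r` with integer arguments: zero if any argument is negative. -/
noncomputable def pbarZ (r : ℕ) (N1 N2 k1 k2 n : ℤ) : ℕ :=
  if 0 ≤ N1 ∧ 0 ≤ N2 ∧ 0 ≤ k1 ∧ 0 ≤ k2 ∧ 0 ≤ n then
    pbar r N1.toNat N2.toNat k1.toNat k2.toNat n.toNat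
  else 0

/-- `Q̄_r(N₁,N₂,k₁,k₂,n)`: number of two-colored partitions of `n` with exactly `k₁`
distinct parts of the first kind, each positive, divisible by `r` and at most `N₁·r`,
and exactly `k₂` distinct parts of the second kind, each positive and at most `N₂`. -/
noncomputable def Qbar (r N1 N2 k1 k2 n : ℕ) : ℕ :=
  Nat.card {p : Multiset ℕ × Multiset ℕ //
    p.1.sum + p.2.sum = n ∧ p.1.Nodup ∧ p.2.Nodup ∧ p.1.card = k1 ∧ p.2.card = k2 ∧
    (∀ x ∈ p.1, 0 < x ∧ r ∣ x ∧ x ≤ N1 * r) ∧ (∀ x ∈ p.2, 0 < x ∧ x ≤ N2)}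

/-!
The counts are coefficients of Gaussian binomials: `pcount N k n` is the coefficient of `qⁿ`
in `[N + k choose k]_q`, and `p̄_r` counts are coefficients of products of such polynomials,
the first factor taken at `q ^ r`. In `ℤ[q]⟦z⟧` put `F = ∑ₖ [N + k choose k]_q zᵏ`,
`E = ∑ₘ q^(m choose 2) [N + 1 choose m]_q zᵐ` and `P = (z; q)_{N+1} = ∏_{i ≤ N} (1 - qⁱ z)`.
The `q`-binomial theorem and its dual give `F · P = 1` and `E = (-z; q)_{N+1}`, and
`(1 - x)(1 + x)(1 + x²) = 1 - x⁴` gives `P(q, z) · E · P(q², -z²) = P(q⁴, z⁴)`. Hence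
`F(q⁴, z⁴) · E = F(q², -z²) · F`, and the theorem compares the coefficients of `zᵏ qⁿ`.
-/

open Finset

lemma gauss_eq_zero_of_lt {n k : ℕ} (h : n < k) : gauss n k = 0 := by
  induction n generalizing k with
  | zero => obtain ⟨k, rfl⟩ : ∃ j, k = j + 1 := ⟨k - 1, by omega⟩; rfl
  | succ n ih =>
    obtain ⟨k, rfl⟩ : ∃ j, k = j + 1 := ⟨k - 1, by omega⟩
    rw [gauss, ih (by omega), ih (by omega), mul_zero, add_zero]

lemma gauss_self (n : ℕ) : gauss n n = 1 := by
  induction n with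
  | zero => rfl
  | succ n ih =>
    rw [gauss, ih, gauss_eq_zero_of_lt n.lt_succ_self, Nat.sub_self, pow_zero, mul_one, zero_add]

lemma finite_of_sum_eq {n : ℕ} {P : Multiset ℕ → Prop}
    (hP : ∀ s, P s → s.sum = n ∧ ∀ x ∈ s, 0 < x) : Finite {s // P s} :=
  Finite.of_injective (fun s => (⟨s.1, (hP s.1 s.2).2 _, (hP s.1 s.2).1⟩ : n.Partition))
    fun _ _ h => Subtype.ext (congrArg Nat.Partition.parts h)

instance (k n : ℕ) (Q : ℕ → Prop) :
    Finite {s : Multiset ℕ // s.sum = n ∧ s.card ≤ k ∧ ∀ x ∈ s, 0 < x ∧ Q x} :=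
  finite_of_sum_eq fun _ hs => ⟨hs.1, fun x hx => (hs.2.2 x hx).1⟩

lemma natCard_sum_eq_of_forall_eq_zero {n : ℕ} {P : Multiset ℕ → Prop} (h0 : P 0)
    (hP : ∀ s, P s → s = 0) :
    Nat.card {s : Multiset ℕ // s.sum = n ∧ P s} = if n = 0 then 1 else 0 := by
  have : {s : Multiset ℕ | s.sum = n ∧ P s} = if n = 0 then {0} else ∅ := by
    ext s
    constructor
    · rintro ⟨rfl, hs⟩
      simp [hP s hs]
    · split_ifs with hn <;> simp_all
  rw [← Set.coe_ofPred, this]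
  split_ifs <;> simp

lemma pcount_zero_right (N n : ℕ) : pcount N 0 n = if n = 0 then 1 else 0 :=
  natCard_sum_eq_of_forall_eq_zero (by simp) fun _ hs =>
    Multiset.card_eq_zero.mp (Nat.le_zero.mp hs.1)

lemma pcount_zero_left (k n : ℕ) : pcount 0 k n = if n = 0 then 1 else 0 :=
  natCard_sum_eq_of_forall_eq_zero (by simp) fun _ hs =>
    Multiset.eq_zero_of_forall_notMem fun x hx => by have := hs.2 x hx; omega

lemma pcount_succ_succ (N k n : ℕ) :
    pcount (N + 1) (k + 1) n =
      pcount N (k + 1) n + if N + 1 ≤ n then pcount (N + 1) k (n - (N + 1)) else 0 := by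
  let P (s : Multiset ℕ) : Prop := s.sum = n ∧ s.card ≤ k + 1 ∧ ∀ x ∈ s, 0 < x ∧ x ≤ N + 1
  have hwithout : Nat.card {s : Subtype P // N + 1 ∉ s.1} = pcount N (k + 1) n := by
    refine Nat.card_congr ((Equiv.subtypeSubtypeEquivSubtypeInter P (N + 1 ∉ ·)).trans
      (Equiv.subtypeEquivRight fun s => ?_))
    constructor
    · rintro ⟨⟨hsum, hcard, hs⟩, hN⟩
      refine ⟨hsum, hcard, fun x hx => ⟨(hs x hx).1, ?_⟩⟩
      have := (hs x hx).2
      have : x ≠ N + 1 := fun h => hN (h ▸ hx)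
      omega
    · rintro ⟨hsum, hcard, hs⟩
      exact ⟨⟨hsum, hcard, fun x hx => ⟨(hs x hx).1, by linarith [(hs x hx).2]⟩⟩,
        fun h => by linarith [(hs _ h).2]⟩
  have hwith : Nat.card {s : Subtype P // N + 1 ∈ s.1} =
      if N + 1 ≤ n then pcount (N + 1) k (n - (N + 1)) else 0 := by
    rw [Nat.card_congr (Equiv.subtypeSubtypeEquivSubtypeInter P (N + 1 ∈ ·))]
    split_ifs with hn
    · refine Nat.card_congr
        { toFun := fun s => ⟨s.1.erase (N + 1), ?_⟩
          invFun := fun t => ⟨(N + 1) ::ₘ t.1, ?_⟩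
          left_inv := fun s => Subtype.ext (Multiset.cons_erase s.2.2)
          right_inv := fun t => Subtype.ext (Multiset.erase_cons_head _ _) }
      · obtain ⟨s, ⟨hsum, hcard, hs⟩, hN⟩ := s
        dsimp only
        have := Multiset.sum_erase hN
        have := Multiset.card_erase_add_one hN
        exact ⟨by omega, by omega, fun x hx => hs x (Multiset.mem_of_mem_erase hx)⟩
      · obtain ⟨t, hsum, hcard, ht⟩ := t
        refine ⟨⟨by simp; omega, by simpa using hcard, ?_⟩, Multiset.mem_cons_self _ _⟩
        simpa using ht
    · exact Nat.card_eq_zero.mpr <| .inl ⟨fun s => hn (s.2.1.1 ▸ Multiset.le_sum_of_mem s.2.2)⟩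
  rw [show pcount (N + 1) (k + 1) n = Nat.card (Subtype P) from rfl,
    ← Nat.card_congr (Equiv.sumCompl fun s : Subtype P => N + 1 ∉ s.1), Nat.card_sum, hwithout]
  simp only [not_not, hwith]

theorem pcount_eq_coeff_gauss (N k n : ℕ) : (pcount N k n : ℤ) = (gauss (N + k) k).coeff n := by
  induction k generalizing N n with
  | zero => simp [pcount_zero_right, gauss, Polynomial.coeff_one]
  | succ k ihk =>
    induction N generalizing n with
    | zero => simp [pcount_zero_left, gauss_self, Polynomial.coeff_one]
    | succ N ihN =>
      rw [show N + 1 + (k + 1) = N + (k + 1) + 1 by ring, gauss, pcount_succ_succ,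
        Polynomial.coeff_add, Polynomial.coeff_X_pow_mul', ← ihN,
        show N + (k + 1) - k = N + 1 by omega, show N + (k + 1) = N + 1 + k by ring]
      split_ifs <;> simp [ihk]

lemma Multiset.map_mul_div_eq_self {r : ℕ} {s : Multiset ℕ} (h : ∀ x ∈ s, r ∣ x) :
    s.map (fun x => r * (x / r)) = s := by
  conv_rhs => rw [← Multiset.map_id s]
  exact Multiset.map_congr rfl fun x hx => Nat.mul_div_cancel' (h x hx)

theorem natCard_dvd_parts_eq_coeff_expand {r : ℕ} (hr : 0 < r) (N k a : ℕ) :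
    (Nat.card {s : Multiset ℕ // s.sum = a ∧ s.card ≤ k ∧ ∀ x ∈ s, 0 < x ∧ r ∣ x ∧ x ≤ N * r} : ℤ)
      = (Polynomial.expand ℤ r (gauss (N + k) k)).coeff a := by
  rw [Polynomial.coeff_expand hr]
  split_ifs with ha
  · obtain ⟨b, rfl⟩ := ha
    rw [Nat.mul_div_cancel_left b hr, ← pcount_eq_coeff_gauss, pcount, Nat.cast_inj]
    symm
    refine Nat.card_congr
      { toFun := fun t => ⟨t.1.map (r * ·), ?_⟩
        invFun := fun s => ⟨s.1.map (· / r), ?_⟩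
        left_inv := fun t => Subtype.ext ?_
        right_inv := fun s => Subtype.ext <| (Multiset.map_map _ _ _).trans <|
          Multiset.map_mul_div_eq_self fun x hx => (s.2.2.2 x hx).2.1 }
    · obtain ⟨t, hsum, hcard, ht⟩ := t
      refine ⟨by rw [Multiset.sum_map_mul_left, Multiset.map_id', hsum], by simpa using hcard, ?_⟩
      simp only [Multiset.mem_map, forall_exists_index, and_imp, forall_apply_eq_imp_iff₂]
      intro x hx
      exact ⟨Nat.mul_pos hr (ht x hx).1, dvd_mul_right r x, by nlinarith [(ht x hx).2]⟩
    · obtain ⟨s, hsum, hcard, hs⟩ := s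
      refine ⟨?_, by simpa using hcard, ?_⟩
      · apply Nat.eq_of_mul_eq_mul_left hr
        rw [← Multiset.sum_map_mul_left,
          Multiset.map_mul_div_eq_self fun x hx => (hs x hx).2.1, hsum]
      · simp only [Multiset.mem_map, forall_exists_index, and_imp, forall_apply_eq_imp_iff₂]
        intro x hx
        obtain ⟨hpos, ⟨c, rfl⟩, hle⟩ := hs x hx
        rw [Nat.mul_div_cancel_left c hr]
        exact ⟨Nat.pos_of_mul_pos_left hpos, by nlinarith⟩
    · simp only [Multiset.map_map]
      conv_rhs => rw [← Multiset.map_id t.1]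
      exact Multiset.map_congr rfl fun x _ => Nat.mul_div_cancel_left x hr
  · refine Nat.cast_eq_zero.mpr <| Nat.card_eq_zero.mpr <| .inl ⟨fun s => ha ?_⟩
    rw [← s.2.1]
    exact Multiset.dvd_sum fun x hx => (s.2.2.2 x hx).2.1

def sumPairEquivSigma (n : ℕ) (C₁ C₂ : Multiset ℕ → Prop) :
    {p : Multiset ℕ × Multiset ℕ // p.1.sum + p.2.sum = n ∧ C₁ p.1 ∧ C₂ p.2} ≃
      Σ x : antidiagonal n, {s // s.sum = x.1.1 ∧ C₁ s} × {s // s.sum = x.1.2 ∧ C₂ s} where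
  toFun p := ⟨⟨(p.1.1.sum, p.1.2.sum), mem_antidiagonal.mpr p.2.1⟩,
    ⟨p.1.1, rfl, p.2.2.1⟩, ⟨p.1.2, rfl, p.2.2.2⟩⟩
  invFun x := ⟨(x.2.1.1, x.2.2.1), by
    rw [x.2.1.2.1, x.2.2.2.1]
    exact ⟨mem_antidiagonal.mp x.1.2, x.2.1.2.2, x.2.2.2.2⟩⟩
  left_inv _ := rfl
  right_inv := by
    rintro ⟨⟨⟨a, b⟩, hab⟩, ⟨s, hsa : s.sum = a, hs⟩, ⟨t, htb : t.sum = b, ht⟩⟩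
    subst hsa htb
    rfl

theorem natCard_sum_add_sum_eq (n : ℕ) (C₁ C₂ : Multiset ℕ → Prop)
    [∀ a, Finite {s : Multiset ℕ // s.sum = a ∧ C₁ s}]
    [∀ a, Finite {s : Multiset ℕ // s.sum = a ∧ C₂ s}] :
    Nat.card {p : Multiset ℕ × Multiset ℕ // p.1.sum + p.2.sum = n ∧ C₁ p.1 ∧ C₂ p.2} =
      ∑ x ∈ antidiagonal n,
        Nat.card {s // s.sum = x.1 ∧ C₁ s} * Nat.card {s // s.sum = x.2 ∧ C₂ s} := by
  rw [Nat.card_congr (sumPairEquivSigma n C₁ C₂), Nat.card_sigma,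
    ← sum_coe_sort (antidiagonal n)]
  simp only [Nat.card_prod]

theorem pbar_eq_coeff {r : ℕ} (hr : 0 < r) (N₁ N₂ k₁ k₂ n : ℕ) :
    (pbar r N₁ N₂ k₁ k₂ n : ℤ) =
      (Polynomial.expand ℤ r (gauss (N₁ + k₁) k₁) * gauss (N₂ + k₂) k₂).coeff n := by
  have hsplit : pbar r N₁ N₂ k₁ k₂ n = ∑ x ∈ antidiagonal n, _ :=
    (Nat.card_congr (Equiv.subtypeEquivRight fun p => by tauto)).trans
      (natCard_sum_add_sum_eq n (fun s => s.card ≤ k₁ ∧ ∀ x ∈ s, 0 < x ∧ r ∣ x ∧ x ≤ N₁ * r)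
        (fun s => s.card ≤ k₂ ∧ ∀ x ∈ s, 0 < x ∧ x ≤ N₂))
  rw [hsplit, Polynomial.coeff_mul]
  push_cast
  refine sum_congr rfl fun x _ => ?_
  rw [natCard_dvd_parts_eq_coeff_expand hr, ← pcount_eq_coeff_gauss]
  rfl

lemma pbarZ_eq_coeff {r : ℕ} (hr : 0 < r) (N₁ N₂ k₁ k₂ c n : ℕ) :
    (pbarZ r N₁ ((N₂ : ℤ) - k₂) k₁ k₂ ((n : ℤ) - c) : ℤ) =
      (Polynomial.expand ℤ r (gauss (N₁ + k₁) k₁) * (X ^ c * gauss N₂ k₂)).coeff n := by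
  rw [mul_left_comm, Polynomial.coeff_X_pow_mul']
  rcases le_or_gt k₂ N₂ with hk | hk
  · obtain ⟨N, rfl⟩ := Nat.exists_eq_add_of_le' hk
    rw [pbarZ, ← pbar_eq_coeff hr]
    split_ifs <;> first | omega | simp
  · rw [pbarZ, if_neg (by omega), gauss_eq_zero_of_lt hk]
    simp

section Dilation

variable {R : Type*} [CommRing R]

/-- `f(q, z) ↦ f(q ^ r, c z ^ r)` on `R[q]⟦z⟧`. -/
noncomputable def dilate (r : ℕ) (hr : r ≠ 0) (c : R[X]) :
    PowerSeries R[X] →+* PowerSeries R[X] :=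
  (RingHomClass.toRingHom (PowerSeries.expand r hr)).comp
    ((PowerSeries.rescale c).comp (PowerSeries.map (Polynomial.expand R r).toRingHom))

variable {r : ℕ} (hr : r ≠ 0) (c : R[X])

lemma dilate_C (a : R[X]) :
    dilate r hr c (PowerSeries.C a) = PowerSeries.C (Polynomial.expand R r a) := by
  have hC (b : R[X]) : PowerSeries.rescale c (PowerSeries.C b) = PowerSeries.C b := by
    ext n
    rw [PowerSeries.coeff_rescale, PowerSeries.coeff_C]
    split_ifs with hn <;> simp [hn]
  simp [dilate, hC, PowerSeries.expand_C]

lemma dilate_X : dilate r hr c PowerSeries.X = PowerSeries.C c * PowerSeries.X ^ r := by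
  simp [dilate, PowerSeries.expand_C]

lemma coeff_dilate (f : PowerSeries R[X]) (k : ℕ) :
    PowerSeries.coeff k (dilate r hr c f) =
      if r ∣ k then c ^ (k / r) * Polynomial.expand R r (PowerSeries.coeff (k / r) f) else 0 := by
  simp [dilate, PowerSeries.coeff_expand]

lemma sum_range_ite_dvd {M : Type*} [AddCommMonoid M] {r : ℕ} (hr : 0 < r) (k : ℕ) (f : ℕ → M) :
    ∑ a ∈ range (k + 1), (if r ∣ a then f a else 0) = ∑ j ∈ range (k / r + 1), f (r * j) := by
  rw [← sum_filter]
  refine sum_nbij' (· / r) (r * ·) ?_ ?_ ?_ ?_ ?_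
  · simp only [mem_filter, mem_range, and_imp]
    intro a ha _
    exact Nat.lt_succ_of_le (Nat.div_le_div_right (Nat.le_of_lt_succ ha))
  · simp only [mem_filter, mem_range]
    intro j hj
    refine ⟨Nat.lt_succ_of_le ?_, dvd_mul_right r j⟩
    rw [mul_comm]
    exact (Nat.le_div_iff_mul_le hr).mp (Nat.le_of_lt_succ hj)
  · intro a ha
    exact Nat.mul_div_cancel' (mem_filter.mp ha).2
  · intro j _
    exact Nat.mul_div_cancel_left j hr
  · intro a ha
    rw [Nat.mul_div_cancel' (mem_filter.mp ha).2]

lemma coeff_dilate_mul (f g : PowerSeries R[X]) (k : ℕ) :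
    PowerSeries.coeff k (dilate r hr c f * g) =
      ∑ j ∈ range (k / r + 1),
        c ^ j * Polynomial.expand R r (PowerSeries.coeff j f) * PowerSeries.coeff (k - r * j) g := by
  rw [PowerSeries.coeff_mul, Nat.sum_antidiagonal_eq_sum_range_succ_mk]
  simp only [coeff_dilate, ite_mul, zero_mul]
  rw [sum_range_ite_dvd (Nat.pos_of_ne_zero hr)]
  simp only [Nat.mul_div_cancel_left _ (Nat.pos_of_ne_zero hr)]

end Dilation

noncomputable def gaussSeries (N : ℕ) : PowerSeries ℤ[X] :=
  PowerSeries.mk fun k => gauss (N + k) k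

noncomputable def qBinomialSeries (n : ℕ) : PowerSeries ℤ[X] :=
  PowerSeries.mk fun m => X ^ m.choose 2 * gauss n m

noncomputable def qPochhammer (n : ℕ) : PowerSeries ℤ[X] :=
  ∏ i ∈ range n, (1 - PowerSeries.C (X ^ i) * PowerSeries.X)

lemma one_sub_mul_gaussSeries_succ (N : ℕ) :
    (1 - PowerSeries.C (X ^ (N + 1)) * PowerSeries.X) * gaussSeries (N + 1) = gaussSeries N := by
  refine PowerSeries.ext fun k => ?_
  rcases k with _ | k
  · simp [gaussSeries, gauss]
  · rw [sub_mul, one_mul, mul_assoc, map_sub, PowerSeries.coeff_C_mul,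
      PowerSeries.coeff_succ_X_mul]
    simp only [gaussSeries, PowerSeries.coeff_mk]
    rw [show N + 1 + (k + 1) = N + (k + 1) + 1 by ring, gauss,
      show N + (k + 1) - k = N + 1 by omega, show N + (k + 1) = N + 1 + k by ring]
    ring

theorem gaussSeries_mul_qPochhammer (N : ℕ) : gaussSeries N * qPochhammer (N + 1) = 1 := by
  induction N with
  | zero =>
    refine PowerSeries.ext fun k => ?_
    rcases k with _ | k
    · simp [gaussSeries, qPochhammer, gauss]
    · simp [gaussSeries, qPochhammer, mul_sub, gauss_self, PowerSeries.coeff_one]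
  | succ N ih =>
    rw [qPochhammer, prod_range_succ, ← qPochhammer]
    linear_combination ih + qPochhammer (N + 1) * one_sub_mul_gaussSeries_succ N

theorem qBinomialSeries_eq_prod (n : ℕ) :
    qBinomialSeries n = ∏ i ∈ range n, (1 + PowerSeries.C (X ^ i) * PowerSeries.X) := by
  induction n with
  | zero =>
    refine PowerSeries.ext fun m => ?_
    rcases m with _ | m
    · simp [qBinomialSeries, gauss]
    · simp [qBinomialSeries, gauss, PowerSeries.coeff_one]
  | succ n ih =>
    rw [prod_range_succ, ← ih]
    refine PowerSeries.ext fun m => ?_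
    rcases m with _ | m
    · simp [qBinomialSeries, gauss]
    · rw [show qBinomialSeries n * (1 + PowerSeries.C (X ^ n) * PowerSeries.X) =
          qBinomialSeries n + PowerSeries.C (X ^ n) * (PowerSeries.X * qBinomialSeries n) by ring,
        map_add, PowerSeries.coeff_C_mul, PowerSeries.coeff_succ_X_mul]
      simp only [qBinomialSeries, PowerSeries.coeff_mk]
      rcases le_or_gt m n with hm | hm
      · obtain ⟨d, rfl⟩ := Nat.exists_eq_add_of_le hm
        rw [gauss, Nat.choose_succ_succ, Nat.choose_one_right, Nat.add_sub_cancel_left]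
        ring
      · rw [gauss, gauss_eq_zero_of_lt hm]
        ring

theorem qPochhammer_mul_qBinomialSeries_mul_dilate (n : ℕ) :
    qPochhammer n * qBinomialSeries n * dilate 2 two_ne_zero (-1) (qPochhammer n) =
      dilate 4 four_ne_zero 1 (qPochhammer n) := by
  simp only [qPochhammer, qBinomialSeries_eq_prod, map_prod, ← prod_mul_distrib]
  refine prod_congr rfl fun i _ => ?_
  simp only [map_sub, map_one, map_mul, map_neg, dilate_C, dilate_X, map_pow,
    Polynomial.expand_X]
  ring

theorem dilate_gaussSeries_mul_qBinomialSeries (N : ℕ) :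
    dilate 4 four_ne_zero 1 (gaussSeries N) * qBinomialSeries (N + 1) =
      dilate 2 two_ne_zero (-1) (gaussSeries N) * gaussSeries N := by
  set σ₂ := dilate 2 two_ne_zero (-1 : ℤ[X])
  set σ₄ := dilate 4 four_ne_zero (1 : ℤ[X])
  set F := gaussSeries N
  set E := qBinomialSeries (N + 1)
  set P := qPochhammer (N + 1)
  have hF : F * P = 1 := gaussSeries_mul_qPochhammer N
  have hF₂ : σ₂ F * σ₂ P = 1 := by rw [← map_mul, hF, map_one]
  have hF₄ : σ₄ F * σ₄ P = 1 := by rw [← map_mul, hF, map_one]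
  -- σ₄F · E = σ₄F · E · (F P) (σ₂F σ₂P) = F σ₂F · σ₄F (P E σ₂P) = F σ₂F · σ₄F σ₄P = F σ₂F
  linear_combination (-σ₄ F * E) * hF + (-σ₄ F * E * F * P) * hF₂ + (F * σ₂ F) * hF₄ +
    (F * σ₂ F * σ₄ F) * qPochhammer_mul_qBinomialSeries_mul_dilate (N + 1)

theorem stmt16 (N k n : ℕ) :
    (∑ j ∈ Finset.range (k / 4 + 1),
        (pbarZ 4 (N : ℤ) ((N : ℤ) + 1 - k + 4 * j) (j : ℤ) ((k : ℤ) - 4 * j)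
          ((n : ℤ) - (k - 4 * j).choose 2) : ℤ)) =
      ∑ j ∈ Finset.range (k / 2 + 1),
        (-1 : ℤ) ^ j * pbar 2 N N j (k - 2 * j) n := by
  have h := congrArg (fun f => (PowerSeries.coeff k f).coeff n)
    (dilate_gaussSeries_mul_qBinomialSeries N)
  simp only [coeff_dilate_mul, Polynomial.finsetSum_coeff] at h
  convert h using 1 <;> refine sum_congr rfl fun j hj => ?_
  · have hj : 4 * j ≤ k := by have := mem_range.mp hj; omega
    rw [show (N : ℤ) + 1 - k + 4 * j = ((N + 1 : ℕ) : ℤ) - ((k - 4 * j : ℕ) : ℤ) by omega,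
      show (k : ℤ) - 4 * j = ((k - 4 * j : ℕ) : ℤ) by omega, pbarZ_eq_coeff (by norm_num)]
    simp [gaussSeries, qBinomialSeries]
  · rw [show ((-1 : ℤ[X])) ^ j = Polynomial.C ((-1) ^ j) by simp, mul_assoc,
      Polynomial.coeff_C_mul, pbar_eq_coeff (by norm_num)]
    simp [gaussSeries]
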